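/- Let f : ℂ → ℂ be holomorphic (differentiable on all of ℂ), set u(x,y) := 2 Re f(x + iy), and define H(x,y) := x ∂_x u(x,y) − u(x,y) (equivalently, H = x² ∂_x(x^{−1} u) wherever x ≠ 0). Then x (H_xx + H_yy) − 2 H_x = 0 at every point of ℝ²; in particular H_xx + H_yy − (2/x) H_x = 0 wherever x ≠ 0. -/

import Mathlib

noncomputable section

/-- Partial derivative in the first (x) variable of a function on ℝ². -/
def pdx (f : ℝ × ℝ → ℝ) (q : ℝ × ℝ) : ℝ :=
  fderiv ℝ f q (1, 0)

/-- Partial derivative in the second (y) variable of a function on ℝ². -/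
def pdy (f : ℝ × ℝ → ℝ) (q : ℝ × ℝ) : ℝ :=
  fderiv ℝ f q (0, 1)

/-- u(x,y) = 2 Re f(x + iy) for f : ℂ → ℂ. -/
def uRe (f : ℂ → ℂ) (q : ℝ × ℝ) : ℝ :=
  2 * (f (q.1 + q.2 * Complex.I)).re

/-- H(x,y) = x ∂_x u(x,y) − u(x,y). -/
def Hfun (f : ℂ → ℂ) (q : ℝ × ℝ) : ℝ :=
  q.1 * pdx (uRe f) q - uRe f q

/-- The ℝ-linear embedding (x,y) ↦ x + iy. -/
def eCLM : ℝ × ℝ →L[ℝ] ℂ := Complex.equivRealProdCLM.symm.toContinuousLinearMap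

lemma eCLM_apply (q : ℝ × ℝ) : eCLM q = q.1 + q.2 * Complex.I :=
  Complex.equivRealProdCLM_symm_apply q

lemma diff_deriv {f : ℂ → ℂ} (hf : Differentiable ℂ f) : Differentiable ℂ (deriv f) :=
  (contDiff_infty_iff_deriv.mp hf.contDiff).2.differentiable (by simp)

lemma hasFDerivAt_uRe (f : ℂ → ℂ) (hf : Differentiable ℂ f) (q : ℝ × ℝ) :
    HasFDerivAt (uRe f)
      (((2:ℝ) • Complex.reCLM).comp
        (((ContinuousLinearMap.smulRight (1 : ℂ →L[ℂ] ℂ)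
            (deriv f (q.1 + q.2 * Complex.I))).restrictScalars ℝ).comp eCLM)) q := by
  have h1 : HasFDerivAt eCLM eCLM q := eCLM.hasFDerivAt
  have h2 : HasFDerivAt f
      ((ContinuousLinearMap.smulRight (1 : ℂ →L[ℂ] ℂ)
        (deriv f (q.1 + q.2 * Complex.I))).restrictScalars ℝ) (eCLM q) := by
    rw [eCLM_apply]
    exact ((hf _).hasDerivAt.hasFDerivAt).restrictScalars ℝ
  have h3 := (((2:ℝ) • Complex.reCLM).hasFDerivAt.comp q (h2.comp q h1))
  have h4 : uRe f = ⇑((2:ℝ) • Complex.reCLM) ∘ f ∘ ⇑eCLM := by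
    funext p
    simp [uRe, eCLM_apply]
  rw [h4]
  exact h3

lemma diff_uRe {f : ℂ → ℂ} (hf : Differentiable ℂ f) : Differentiable ℝ (uRe f) :=
  fun q => (hasFDerivAt_uRe f hf q).differentiableAt

lemma pdx_uRe {f : ℂ → ℂ} (hf : Differentiable ℂ f) :
    pdx (uRe f) = uRe (deriv f) := by
  funext q
  have := (hasFDerivAt_uRe f hf q).fderiv
  simp only [pdx, this]
  simp [uRe, eCLM_apply]

lemma pdy_uRe {f : ℂ → ℂ} (hf : Differentiable ℂ f) :
    pdy (uRe f) = uRe (fun z => Complex.I * deriv f z) := by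
  funext q
  have := (hasFDerivAt_uRe f hf q).fderiv
  simp only [pdy, this]
  simp [uRe, eCLM_apply, mul_comm]

lemma pdx_sub {g h : ℝ × ℝ → ℝ} (hg : Differentiable ℝ g) (hh : Differentiable ℝ h)
    (q : ℝ × ℝ) : pdx (fun p => g p - h p) q = pdx g q - pdx h q := by
  simp [pdx, fderiv_fun_sub (hg q) (hh q)]

lemma pdy_sub {g h : ℝ × ℝ → ℝ} (hg : Differentiable ℝ g) (hh : Differentiable ℝ h)
    (q : ℝ × ℝ) : pdy (fun p => g p - h p) q = pdy g q - pdy h q := by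
  simp [pdy, fderiv_fun_sub (hg q) (hh q)]

lemma fderiv_fst' (q : ℝ × ℝ) :
    fderiv ℝ (fun p : ℝ × ℝ => p.1) q = ContinuousLinearMap.fst ℝ ℝ ℝ :=
  (ContinuousLinearMap.fst ℝ ℝ ℝ).fderiv

lemma pdx_mul_fst {g : ℝ × ℝ → ℝ} (hg : Differentiable ℝ g) (q : ℝ × ℝ) :
    pdx (fun p => p.1 * g p) q = g q + q.1 * pdx g q := by
  have e2 : fderiv ℝ (fun p : ℝ × ℝ => p.1 * g p) q
      = q.1 • fderiv ℝ g q + g q • fderiv ℝ (fun p : ℝ × ℝ => p.1) q :=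
    fderiv_mul (differentiable_fst q) (hg q)
  simp [pdx, e2, fderiv_fst']
  ring

lemma pdy_mul_fst {g : ℝ × ℝ → ℝ} (hg : Differentiable ℝ g) (q : ℝ × ℝ) :
    pdy (fun p => p.1 * g p) q = q.1 * pdy g q := by
  have e2 : fderiv ℝ (fun p : ℝ × ℝ => p.1 * g p) q
      = q.1 • fderiv ℝ g q + g q • fderiv ℝ (fun p : ℝ × ℝ => p.1) q :=
    fderiv_mul (differentiable_fst q) (hg q)
  simp [pdy, e2, fderiv_fst']

/-- for f holomorphic on ℂ, u = 2 Re f(x+iy), H = x u_x − u, one has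
x (H_xx + H_yy) − 2 H_x = 0 at every point of ℝ²; in particular
H_xx + H_yy − (2/x) H_x = 0 wherever x ≠ 0. -/
theorem siklos_ansatz_solves_einstein_eq (f : ℂ → ℂ) (hf : Differentiable ℂ f) :
    (∀ q : ℝ × ℝ,
        q.1 * (pdx (pdx (Hfun f)) q + pdy (pdy (Hfun f)) q) - 2 * pdx (Hfun f) q = 0)
    ∧ (∀ q : ℝ × ℝ, q.1 ≠ 0 →
        pdx (pdx (Hfun f)) q + pdy (pdy (Hfun f)) q - (2 / q.1) * pdx (Hfun f) q = 0) := by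
  set f1 := deriv f with hf1
  set f2 := deriv f1 with hf2
  set f3 := deriv f2 with hf3
  have d1 : Differentiable ℂ f1 := diff_deriv hf
  have d2 : Differentiable ℂ f2 := diff_deriv d1
  have d3 : Differentiable ℂ f3 := diff_deriv d2
  have hH : Hfun f = fun q => q.1 * uRe f1 q - uRe f q := by
    funext q; simp [Hfun, pdx_uRe hf, hf1]
  have dm1 : Differentiable ℝ (fun p : ℝ × ℝ => p.1 * uRe f1 p) :=
    differentiable_fst.mul (diff_uRe d1)
  -- pdx H = fun q => q.1 * uRe f2 q
  have hpdxH : pdx (Hfun f) = fun q => q.1 * uRe f2 q := by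
    funext q
    rw [hH, pdx_sub dm1 (diff_uRe hf), pdx_mul_fst (diff_uRe d1) q, pdx_uRe d1, pdx_uRe hf]
    ring
  -- pdx pdx H = uRe f2 + q.1 * uRe f3
  have hpdxxH : pdx (pdx (Hfun f)) = fun q => uRe f2 q + q.1 * uRe f3 q := by
    funext q
    rw [hpdxH, pdx_mul_fst (diff_uRe d2) q, pdx_uRe d2]
  -- pdy H
  have hpdyH : pdy (Hfun f) = fun q =>
      q.1 * uRe (fun z => Complex.I * f2 z) q - uRe (fun z => Complex.I * f1 z) q := by
    funext q
    rw [hH, pdy_sub dm1 (diff_uRe hf), pdy_mul_fst (diff_uRe d1) q, pdy_uRe d1, pdy_uRe hf]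
  have dI1 : Differentiable ℂ (fun z => Complex.I * f1 z) := d1.const_mul _
  have dI2 : Differentiable ℂ (fun z => Complex.I * f2 z) := d2.const_mul _
  have hderI : ∀ (g : ℂ → ℂ), Differentiable ℂ g →
      deriv (fun z => Complex.I * g z) = fun z => Complex.I * deriv g z := by
    intro g hg; funext z
    exact deriv_const_mul _ (hg z)
  have dmI2 : Differentiable ℝ (fun p : ℝ × ℝ => p.1 * uRe (fun z => Complex.I * f2 z) p) :=
    differentiable_fst.mul (diff_uRe dI2)
  -- pdy pdy H = fun q => uRe f2 q - q.1 * uRe f3 q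
  have hpdyyH : pdy (pdy (Hfun f)) = fun q => uRe f2 q - q.1 * uRe f3 q := by
    funext q
    rw [hpdyH, pdy_sub dmI2 (diff_uRe dI1), pdy_mul_fst (diff_uRe dI2) q, pdy_uRe dI2,
      pdy_uRe dI1, hderI _ d2, hderI _ d1]
    simp only [uRe]
    have : ∀ w : ℂ, (Complex.I * (Complex.I * w)).re = -w.re := by
      intro w; simp [Complex.mul_re]
    rw [this, this]
    ring
  constructor
  · intro q
    rw [hpdxxH, hpdyyH, hpdxH]
    ring
  · intro q hq
    rw [hpdxxH, hpdyyH, hpdxH]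
    field_simp
    ring
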